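/- Let U be a non-principal ultrafilter on ω and consider the ultraproduct ∏_U P_i of the posets P_0, P_1, P_2, .... Then the set Γ = ⋃_{k∈ω} {[z̄] : z ∈ P_k \ {q}} (the set of elements of the ultraproduct represented by eventually-constant images of elements other than q) is an (ω,ω)-filter of ∏_U P_i. -/

import Mathlib

open Cardinal

universe u

/-- An `(α,β)`-filter: an up-closed set, closed under all existing meets of subsets of
itself of cardinality `< α`, and meeting every subset of `P` of cardinality `< β` whose
join exists and lies in the set. -/
def IsMNFilter (α β : Cardinal.{u}) {P : Type u} [PartialOrder P] (Γ : Set P) : Prop :=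
  (∀ x ∈ Γ, ∀ y : P, x ≤ y → y ∈ Γ) ∧
  (∀ S : Set P, S ⊆ Γ → #S < α → ∀ a : P, IsGLB S a → a ∈ Γ) ∧
  (∀ T : Set P, #T < β → ∀ a : P, IsLUB T a → a ∈ Γ → (T ∩ Γ).Nonempty)

/-- The setoid on `∀ i, P i` identifying functions that agree on a set belonging to `U`. -/
def upSetoid {ι : Type u} (U : Ultrafilter ι) (P : ι → Type u) : Setoid (∀ i, P i) where
  r x y := {i | x i = y i} ∈ U
  iseqv := by
    refine ⟨fun x => by
        rw [show {i | x i = x i} = Set.univ by simp]; exact Filter.univ_mem,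
      fun {x y} h => ?_, fun {x y z} h1 h2 => ?_⟩
    · exact Filter.mem_of_superset h fun i hi => hi.symm
    · filter_upwards [h1, h2] with i hi1 hi2 using hi1.trans hi2

/-- The ultraproduct of the family `P` of posets over the ultrafilter `U`. -/
def UProd {ι : Type u} (U : Ultrafilter ι) (P : ι → Type u) : Type u :=
  Quotient (upSetoid U P)

instance uprodPartialOrder {ι : Type u} (U : Ultrafilter ι) (P : ι → Type u)
    [∀ i, PartialOrder (P i)] : PartialOrder (UProd U P) where
  le := Quotient.lift₂ (fun x y => {i | x i ≤ y i} ∈ U) (by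
    intro a₁ b₁ a₂ b₂ h₁ h₂
    apply propext
    constructor <;> intro h
    · filter_upwards [h, h₁, h₂] with i hle he1 he2
      rw [← he1, ← he2]; exact hle
    · filter_upwards [h, h₁, h₂] with i hle he1 he2
      rw [he1, he2]; exact hle)
  le_refl := by
    rintro ⟨x⟩
    show {i | x i ≤ x i} ∈ U
    rw [show {i | x i ≤ x i} = Set.univ by simp]
    exact Filter.univ_mem
  le_trans := by
    rintro ⟨x⟩ ⟨y⟩ ⟨z⟩ h1 h2
    show {i | x i ≤ z i} ∈ U
    filter_upwards [(h1 : {i | x i ≤ y i} ∈ U), (h2 : {i | y i ≤ z i} ∈ U)] with i u1 u2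
      using le_trans u1 u2
  le_antisymm := by
    rintro ⟨x⟩ ⟨y⟩ h1 h2
    apply Quotient.sound
    show {i | x i = y i} ∈ U
    filter_upwards [(h1 : {i | x i ≤ y i} ∈ U), (h2 : {i | y i ≤ x i} ∈ U)] with i u1 u2
      using le_antisymm u1 u2

/-- The levels `N n`: `N 0` has four elements (`a`, `b`, `c`, `d`), and `N (n+1)` has one
element `e_{xy}` for each unordered pair of distinct elements `x`, `y` of `N n`. -/
def N : ℕ → Type
  | 0 => Fin 4
  | n + 1 => { s : Sym2 (N n) // ¬s.IsDiag }

/-- The element `e_{xy}` of `N (n+1)` corresponding to distinct `x y : N n`. -/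
def mkE {n : ℕ} (x y : N n) (h : x ≠ y) : N (n + 1) :=
  ⟨s(x, y), by simp [h]⟩

/-- The carrier of the poset `P_k`: the elements `p`, `q`, the elements of `N n` for
`n ≤ k` (constructor `node`), and two elements `x'` (constructor `prime`) and `x''`
(constructor `dprime`) for every element `x` of `N n` with `n ≤ k`. -/
inductive Elt (k : ℕ) : Type
  | p : Elt k
  | q : Elt k
  | node (n : ℕ) (hn : n ≤ k) (x : N n) : Elt k
  | prime (n : ℕ) (hn : n ≤ k) (x : N n) : Elt k
  | dprime (n : ℕ) (hn : n ≤ k) (x : N n) : Elt k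

/-- The order on `P_k`: (1) `x < p` for `x ∈ N₀`; (2) `x < x'` and `x < x''` for
`x ∈ N_n`, `n ≤ k`; (3) `e_{xy} < x', x'', y', y''` for `e_{xy} ∈ N_{n+1}`, `n + 1 ≤ k`;
(4) `q < x'` and `q < x''` for `x ∈ N_k`; (5) reflexivity; and nothing else. -/
inductive Le (k : ℕ) : Elt k → Elt k → Prop
  | refl (x : Elt k) : Le k x x
  | node_p (h0 : 0 ≤ k) (x : N 0) : Le k (.node 0 h0 x) .p
  | node_prime (n : ℕ) (hn : n ≤ k) (x : N n) : Le k (.node n hn x) (.prime n hn x)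
  | node_dprime (n : ℕ) (hn : n ≤ k) (x : N n) : Le k (.node n hn x) (.dprime n hn x)
  | e_prime (n : ℕ) (hn : n + 1 ≤ k) (e : N (n + 1)) (x : N n) (hx : x ∈ e.1) :
      Le k (.node (n + 1) hn e) (.prime n (Nat.le_of_succ_le hn) x)
  | e_dprime (n : ℕ) (hn : n + 1 ≤ k) (e : N (n + 1)) (x : N n) (hx : x ∈ e.1) :
      Le k (.node (n + 1) hn e) (.dprime n (Nat.le_of_succ_le hn) x)
  | q_prime (x : N k) : Le k .q (.prime k le_rfl x)
  | q_dprime (x : N k) : Le k .q (.dprime k le_rfl x)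

lemma Le.eq_of_le_node {k n : ℕ} {x : Elt k} {hn : n ≤ k} {w : N n}
    (h : Le k x (Elt.node n hn w)) : x = Elt.node n hn w := by
  cases h; rfl

lemma Le.eq_of_le_q {k : ℕ} {x : Elt k} (h : Le k x Elt.q) : x = Elt.q := by
  cases h; rfl

lemma Le.left_cases {k : ℕ} {x y : Elt k} (h : Le k x y) :
    x = y ∨ (∃ n hn w, x = Elt.node n hn w) ∨ x = Elt.q := by
  cases h with
  | refl => exact Or.inl rfl
  | node_p h0 w => exact Or.inr (Or.inl ⟨_, _, _, rfl⟩)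
  | node_prime n hn w => exact Or.inr (Or.inl ⟨_, _, _, rfl⟩)
  | node_dprime n hn w => exact Or.inr (Or.inl ⟨_, _, _, rfl⟩)
  | e_prime n hn e w hw => exact Or.inr (Or.inl ⟨_, _, _, rfl⟩)
  | e_dprime n hn e w hw => exact Or.inr (Or.inl ⟨_, _, _, rfl⟩)
  | q_prime w => exact Or.inr (Or.inr rfl)
  | q_dprime w => exact Or.inr (Or.inr rfl)

/-- `P_k` as a partial order, with order relation `Le k`. -/
instance EltPartialOrder (k : ℕ) : PartialOrder (Elt k) where
  le := Le k
  le_refl := Le.refl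
  le_trans := by
    intro x y z h1 h2
    rcases h2.left_cases with rfl | ⟨n, hn, w, rfl⟩ | rfl
    · exact h1
    · rw [h1.eq_of_le_node]; exact h2
    · rw [h1.eq_of_le_q]; exact h2
  le_antisymm := by
    intro x y h1 h2
    rcases h1.left_cases with rfl | ⟨n, hn, w, rfl⟩ | rfl
    · rfl
    · exact (h2.eq_of_le_node).symm
    · exact (h2.eq_of_le_q).symm

/-- The canonical embedding of `P_k` into `P_l` for `k ≤ l`. -/
def emb {k l : ℕ} (h : k ≤ l) : Elt k → Elt l
  | .p => .p
  | .q => .q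
  | .node n hn w => .node n (hn.trans h) w
  | .prime n hn w => .prime n (hn.trans h) w
  | .dprime n hn w => .dprime n (hn.trans h) w

/-- For `x ∈ P_k`, the sequence `x̄` whose `i`-th term, for `i ≥ k`, is the image of `x`
in `P_i` under the canonical embeddings (terms below `k` are irrelevant modulo a
non-principal ultrafilter). -/
def bar (k : ℕ) (x : Elt k) : ∀ i : ℕ, Elt i := fun i =>
  if h : k ≤ i then emb h x else Elt.p

/-- The element `[x̄]` of the ultraproduct `∏_U P_i` determined by `x ∈ P_k`. -/
def cls (U : Ultrafilter ℕ) {k : ℕ} (x : Elt k) : UProd U Elt :=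
  Quotient.mk (upSetoid U Elt) (bar k x)

/-!
Give `p` level `0`, the elements of `N_n` and their primes level `n`, and `q` level `∞`.
The level is antitone, and passing to a smaller element raises it by at most one, except
when passing from a prime of the top level `i` of `P_i` down to `q`. The elements `[z̄]`,
`z ≠ q`, are, by finiteness of `P_k`, exactly the classes of sequences of eventually
bounded level; since `U` is non-principal the top level `i` eventually exceeds every bound,
so these classes form a nonempty set that is closed both upwards and downwards. In a poset
without least element such a set is an `(α,β)`-filter for all `α`, `β`.
-/

theorem IsMNFilter.of_isUpperSet_of_isLowerSet {P : Type u} [PartialOrder P] [NoBotOrder P]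
    (α β : Cardinal.{u}) {Γ : Set P} (hne : Γ.Nonempty) (hup : IsUpperSet Γ)
    (hlow : IsLowerSet Γ) : IsMNFilter α β Γ := by
  refine ⟨fun x hx y hxy => hup hxy hx, fun S hS _ a ha => ?_, fun T _ a ha haΓ => ?_⟩
  · rcases S.eq_empty_or_nonempty with rfl | ⟨s, hs⟩
    · obtain ⟨x, hx⟩ := hne
      exact hup ((isGLB_empty_iff.1 ha) x) hx
    · exact hlow (ha.1 hs) (hS hs)
  · rcases T.eq_empty_or_nonempty with rfl | ⟨t, ht⟩
    · exact absurd (isLUB_empty_iff.1 ha) (not_isBot a)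
    · exact ⟨t, ht, hlow (ha.1 ht) haΓ⟩

namespace UProd

variable {ι : Type u} {U : Ultrafilter ι} {P : ι → Type u}

def mk (x : ∀ i, P i) : UProd U P := Quotient.mk _ x

@[elab_as_elim]
theorem ind {motive : UProd U P → Prop} (h : ∀ x, motive (mk x)) (v : UProd U P) : motive v :=
  Quotient.ind h v

theorem mk_le_mk [∀ i, PartialOrder (P i)] {x y : ∀ i, P i} :
    (mk x : UProd U P) ≤ mk y ↔ ∀ᶠ i in U, x i ≤ y i :=
  Iff.rfl

theorem exists_mk_eq_of_eventually_exists {α : Type*} [Finite α] {f : α → ∀ i, P i}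
    {g : ∀ i, P i} (h : ∀ᶠ i in U, ∃ a, g i = f a i) :
    ∃ a, (mk g : UProd U P) = mk (f a) :=
  (Ultrafilter.eventually_exists_iff.1 h).imp fun _ => Quotient.sound

instance [∀ i, PartialOrder (P i)] [∀ i, NoBotOrder (P i)] : NoBotOrder (UProd U P) where
  exists_not_ge := by
    intro v
    induction v using ind with | h g => ?_
    choose b hb using fun i => exists_not_ge (g i)
    refine ⟨mk b, fun h => ?_⟩
    obtain ⟨i, hi⟩ := (mk_le_mk.1 h).exists
    exact hb i hi

end UProd

theorem Ultrafilter.eventually_ge_of_ne_pure {U : Ultrafilter ℕ} (hU : ∀ i, U ≠ pure i)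
    (k : ℕ) : ∀ᶠ i in U, k ≤ i := by
  have hcof : (U : Filter ℕ) ≤ Filter.cofinite :=
    U.le_cofinite_or_eq_pure.resolve_right fun ⟨i, hi⟩ => hU i hi
  exact hcof (Nat.cofinite_eq_atTop ▸ Filter.eventually_ge_atTop k)

instance N.instFinite : ∀ n, Finite (N n)
  | 0 => inferInstanceAs (Finite (Fin 4))
  | n + 1 =>
    have := N.instFinite n
    inferInstanceAs (Finite {s : Sym2 (N n) // ¬s.IsDiag})

theorem bar_of_le {k i : ℕ} (z : Elt k) (h : k ≤ i) : bar k z i = emb h z :=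
  dif_pos h

namespace Elt

variable {k : ℕ}

def toSum : Elt k → Unit ⊕ Unit ⊕ (Fin 3 × Σ n : Fin (k + 1), N n)
  | p => .inl ()
  | q => .inr (.inl ())
  | node n hn x => .inr (.inr (0, ⟨⟨n, Nat.lt_succ_of_le hn⟩, x⟩))
  | prime n hn x => .inr (.inr (1, ⟨⟨n, Nat.lt_succ_of_le hn⟩, x⟩))
  | dprime n hn x => .inr (.inr (2, ⟨⟨n, Nat.lt_succ_of_le hn⟩, x⟩))

theorem toSum_injective : Function.Injective (toSum (k := k)) := by
  intro a b h
  cases a <;> cases b <;> simp_all [toSum]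

instance : Finite (Elt k) := Finite.of_injective _ toSum_injective

instance : NoBotOrder (Elt k) where
  exists_not_ge x := by
    by_contra! h
    have h0 := Le.eq_of_le_node (h (node 0 k.zero_le (0 : Fin 4)))
    have h1 := Le.eq_of_le_node (h (node 0 k.zero_le (1 : Fin 4)))
    have h01 : (0 : Fin 4) = 1 := eq_of_heq (node.inj (h0.symm.trans h1)).2
    exact absurd h01 (by decide)

def level : Elt k → ℕ∞
  | p => 0
  | q => ⊤
  | node n _ _ => n
  | prime n _ _ => n
  | dprime n _ _ => n

theorem level_le_of_ne_q {z : Elt k} (hz : z ≠ q) : z.level ≤ k := by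
  cases z <;> simp_all [level]

theorem level_emb {i : ℕ} (h : k ≤ i) (z : Elt k) : (emb h z).level = z.level := by
  cases z <;> rfl

theorem exists_eq_emb_of_level_le {i : ℕ} (h : k ≤ i) {y : Elt i} (hy : y.level ≤ k) :
    ∃ z : Elt k, y = emb h z := by
  cases y with
  | p => exact ⟨p, rfl⟩
  | q => simp [level] at hy
  | node n _ x => exact ⟨node n (by simpa [level] using hy) x, rfl⟩
  | prime n _ x => exact ⟨prime n (by simpa [level] using hy) x, rfl⟩
  | dprime n _ x => exact ⟨dprime n (by simpa [level] using hy) x, rfl⟩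

theorem level_le_of_le {x y : Elt k} (hxy : x ≤ y) : y.level ≤ x.level := by
  cases hxy <;> simp [level]

theorem level_le_add_one_of_le {x y : Elt k} (hxy : x ≤ y) (hy : y.level < k) :
    x.level ≤ y.level + 1 := by
  cases hxy <;> simp_all [level]

theorem level_bar_le {z : Elt k} (hz : z ≠ q) (i : ℕ) : (bar k z i).level ≤ k := by
  unfold bar
  split_ifs with h
  · rw [level_emb]
    exact level_le_of_ne_q hz
  · simp [level]

end Elt

def standardElements (U : Ultrafilter ℕ) : Set (UProd U Elt) :=
  {v | ∃ (k : ℕ) (z : Elt k), z ≠ Elt.q ∧ v = cls U z}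

section standardElements

variable {U : Ultrafilter ℕ}

theorem standardElements_nonempty : (standardElements U).Nonempty :=
  ⟨cls U (Elt.p : Elt 0), 0, Elt.p, nofun, rfl⟩

theorem mk_mem_standardElements_iff (hU : ∀ i, U ≠ pure i) {g : ∀ i, Elt i} :
    UProd.mk g ∈ standardElements U ↔ ∃ k : ℕ, ∀ᶠ i in U, (g i).level ≤ k := by
  constructor
  · rintro ⟨k, z, hz, hg⟩
    have hgz : ∀ᶠ i in U, g i = bar k z i := Quotient.exact hg
    exact ⟨k, hgz.mono fun i hi => hi ▸ Elt.level_bar_le hz i⟩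
  · rintro ⟨k, hk⟩
    have hgz : ∀ᶠ i in U, ∃ z : {z : Elt k // z ≠ Elt.q}, g i = bar k z i := by
      filter_upwards [hk, U.eventually_ge_of_ne_pure hU k] with i hi hki
      obtain ⟨z, hz⟩ := Elt.exists_eq_emb_of_level_le hki hi
      refine ⟨⟨z, fun hzq => ?_⟩, hz.trans (bar_of_le z hki).symm⟩
      subst hzq
      rw [hz] at hi
      exact ENat.natCast_ne_top k (top_le_iff.1 hi)
    obtain ⟨⟨z, hz⟩, h⟩ := UProd.exists_mk_eq_of_eventually_exists hgz
    exact ⟨k, z, hz, h⟩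

theorem isUpperSet_standardElements (hU : ∀ i, U ≠ pure i) :
    IsUpperSet (standardElements U) := by
  intro v w hvw hv
  induction v using UProd.ind with | h g => ?_
  induction w using UProd.ind with | h g' => ?_
  rw [mk_mem_standardElements_iff hU] at hv ⊢
  obtain ⟨k, hk⟩ := hv
  refine ⟨k, ?_⟩
  filter_upwards [hk, UProd.mk_le_mk.1 hvw] with i hi hle
  exact (Elt.level_le_of_le hle).trans hi

theorem isLowerSet_standardElements (hU : ∀ i, U ≠ pure i) :
    IsLowerSet (standardElements U) := by
  intro v w hwv hv
  induction v using UProd.ind with | h g => ?_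
  induction w using UProd.ind with | h g' => ?_
  rw [mk_mem_standardElements_iff hU] at hv ⊢
  obtain ⟨k, hk⟩ := hv
  refine ⟨k + 1, ?_⟩
  filter_upwards [hk, UProd.mk_le_mk.1 hwv, U.eventually_ge_of_ne_pure hU (k + 1)]
    with i hi hle hki
  have hlt : (g i).level < i := hi.trans_lt (by exact_mod_cast hki)
  calc (g' i).level ≤ (g i).level + 1 := Elt.level_le_add_one_of_le hle hlt
    _ ≤ k + 1 := by gcongr
    _ = ((k + 1 : ℕ) : ℕ∞) := by push_cast; rfl

end standardElements

/-- For a non-principal ultrafilter `U` on `ω`, the set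
`Γ = ⋃_k {[z̄] : z ∈ P_k \ {q}}` is an `(ω,ω)`-filter of the ultraproduct `∏_U P_i`. -/
theorem statement19 (U : Ultrafilter ℕ) (hU : ∀ i : ℕ, U ≠ pure i) :
    IsMNFilter ℵ₀ ℵ₀
      {v : UProd U Elt | ∃ (k : ℕ) (z : Elt k), z ≠ Elt.q ∧ v = cls U z} :=
  IsMNFilter.of_isUpperSet_of_isLowerSet ℵ₀ ℵ₀ standardElements_nonempty
    (isUpperSet_standardElements hU) (isLowerSet_standardElements hU)
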